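/- Let I^exp be the expansion of the monomial x^A in a saturated strongly stable ideal I ⊆ R. Then the Hilbert function satisfies h_{R/I^exp}(j) = h_{R/I}(j) for j < deg(x^A) and h_{R/I^exp}(j) = h_{R/I}(j) + 1 for j ≥ deg(x^A). -/

import Mathlib

open MvPolynomial
open Fin.NatCast

noncomputable section

/-- The polynomial ring `K[x_0,…,x_n]` in `n+1` variables. -/
abbrev PR (K : Type*) [Field K] (n : ℕ) := MvPolynomial (Fin (n+1)) K

variable {K : Type*} [Field K] {n : ℕ}

/-- The monomial `x^A`. -/
def mon (A : Fin (n+1) →₀ ℕ) : PR K n := monomial A 1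

/-- Total degree of the monomial with exponent vector `A`. -/
def mdeg (A : Fin (n+1) →₀ ℕ) : ℕ := ∑ i, A i

/-- The largest index of a variable dividing `x^A` (0 if `A = 0`). -/
def maxIdx (A : Fin (n+1) →₀ ℕ) : Fin (n+1) := WithBot.unbotD 0 (A.support.max)

/-- The exponent vector of `(x_i / x_j) · x^A`. -/
def shiftM (A : Fin (n+1) →₀ ℕ) (i j : Fin (n+1)) : Fin (n+1) →₀ ℕ :=
  A + Finsupp.single i 1 - Finsupp.single j 1

/-- `I` is a monomial ideal: generated by a set of monomials. -/
def IsMonomialIdeal (I : Ideal (PR K n)) : Prop :=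
  ∃ S : Set (Fin (n+1) →₀ ℕ), I = Ideal.span ((fun A => (mon A : PR K n)) '' S)

/-- Strongly stable monomial ideal. -/
def StronglyStable (I : Ideal (PR K n)) : Prop :=
  ∀ A : Fin (n+1) →₀ ℕ, mon A ∈ I → ∀ i j : Fin (n+1), A j ≠ 0 → i < j →
    mon (shiftM A i j) ∈ I

/-- Stable monomial ideal. -/
def Stable (I : Ideal (PR K n)) : Prop :=
  ∀ A : Fin (n+1) →₀ ℕ, A ≠ 0 → mon A ∈ I → ∀ i : Fin (n+1), i < maxIdx A →
    mon (shiftM A i (maxIdx A)) ∈ I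

/-- `x^A` is a minimal monomial generator of `I`. -/
def MinGen (I : Ideal (PR K n)) (A : Fin (n+1) →₀ ℕ) : Prop :=
  mon A ∈ I ∧ ∀ B : Fin (n+1) →₀ ℕ, B ≤ A → B ≠ A → mon B ∉ I

/-- The set of exponent vectors of minimal monomial generators of `I`. -/
def Gens (I : Ideal (PR K n)) : Set (Fin (n+1) →₀ ℕ) := {A | MinGen I A}

/-- The irrelevant maximal ideal `(x_0,…,x_n)`. -/
def irrIdeal (K : Type*) [Field K] (n : ℕ) : Ideal (PR K n) :=
  Ideal.span (Set.range fun i : Fin (n+1) => (X i : PR K n))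

/-- `I` is saturated: `(I : (x_0,…,x_n)) = I`. -/
def Saturated (I : Ideal (PR K n)) : Prop :=
  Submodule.colon I (irrIdeal K n) = I

/-- The saturation `∪ₖ (I : (x_0,…,x_n)^k)`. -/
def saturationOf (I : Ideal (PR K n)) : Ideal (PR K n) :=
  ⨆ k : ℕ, Submodule.colon I (((irrIdeal K n) ^ k : Ideal (PR K n)) : Set (PR K n))

/-- The Hilbert function of `R/I`: `j ↦ dim_K [R/I]_j`. -/
def hilbF {σ : Type*} (I : Ideal (MvPolynomial σ K)) (j : ℕ) : ℕ :=
  Module.finrank K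
    ((homogeneousSubmodule σ K j).map (Ideal.Quotient.mkₐ K I).toLinearMap)

/-- `p` is the Hilbert polynomial of `R/I`. -/
def IsHilbPoly {σ : Type*} (I : Ideal (MvPolynomial σ K)) (p : Polynomial ℚ) : Prop :=
  ∃ N : ℕ, ∀ j : ℕ, N ≤ j → p.eval (j : ℚ) = (hilbF I j : ℚ)

/-- The binomial-coefficient polynomial `C(q, k) = q(q-1)⋯(q-k+1)/k!`. -/
def choosePoly (q : Polynomial ℚ) (k : ℕ) : Polynomial ℚ :=
  ((k.factorial : ℚ))⁻¹ • ∏ j ∈ Finset.range k, (q - Polynomial.C (j : ℚ))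

/-- The canonical representation `p(z) = Σ_{i=0}^d [C(z+i,i+1) − C(z+i−b_i,i+1)]`. -/
def canonicalHP (d : ℕ) (b : ℕ → ℕ) : Polynomial ℚ :=
  ∑ i ∈ Finset.range (d+1),
    (choosePoly (Polynomial.X + Polynomial.C (i : ℚ)) (i+1)
      - choosePoly (Polynomial.X + Polynomial.C (i : ℚ) - Polynomial.C (b i : ℚ)) (i+1))

/-- `x^A >_lex x^B`. -/
def LexGt (A B : Fin (n+1) →₀ ℕ) : Prop :=
  ∃ i : Fin (n+1), (∀ j : Fin (n+1), j < i → A j = B j) ∧ B i < A i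

/-- `I` is a lexsegment ideal. -/
def IsLexsegment (I : Ideal (PR K n)) : Prop :=
  IsMonomialIdeal I ∧ ∀ A B : Fin (n+1) →₀ ℕ, mdeg A = mdeg B → mon B ∈ I →
    LexGt A B → mon A ∈ I

/-- `I` is a homogeneous ideal. -/
def Homog (I : Ideal (PR K n)) : Prop :=
  ∀ f ∈ I, ∀ j : ℕ, homogeneousComponent j f ∈ I

/-- The set of right-shifts of `x^A`. -/
def rightShifts (A : Fin (n+1) →₀ ℕ) : Set (Fin (n+1) →₀ ℕ) :=
  {B | ∃ i : Fin (n+1), (i : ℕ) + 2 ≤ n ∧ A i ≠ 0 ∧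
    B = shiftM A ((((i : ℕ) + 1 : ℕ)) : Fin (n+1)) i}

/-- The set of left-shifts of `x^A`. -/
def leftShifts (A : Fin (n+1) →₀ ℕ) : Set (Fin (n+1) →₀ ℕ) :=
  {B | ∃ i : Fin (n+1), 1 ≤ (i : ℕ) ∧ (i : ℕ) + 1 ≤ n ∧ A i ≠ 0 ∧
    B = shiftM A ((((i : ℕ) - 1 : ℕ)) : Fin (n+1)) i}

/-- The monomials `x^A x_r, …, x^A x_{n-1}` with `r = max(x^A)`. -/
def expSet (A : Fin (n+1) →₀ ℕ) : Set (Fin (n+1) →₀ ℕ) :=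
  {B | ∃ j : Fin (n+1), ((maxIdx A : ℕ)) ≤ (j : ℕ) ∧ (j : ℕ) + 1 ≤ n ∧
    B = A + Finsupp.single j 1}

/-- `x^A ≠ 1` is expandable in `I`. -/
def Expandable (I : Ideal (PR K n)) (A : Fin (n+1) →₀ ℕ) : Prop :=
  A ≠ 0 ∧ MinGen I A ∧ ∀ B ∈ rightShifts A, ¬ MinGen I B

/-- `x^A ≠ 1` is contractible in `I`. -/
def Contractible (I : Ideal (PR K n)) (A : Fin (n+1) →₀ ℕ) : Prop :=
  A ≠ 0 ∧ mon A ∉ I ∧ MinGen I (A + Finsupp.single (((n - 1 : ℕ)) : Fin (n+1)) 1) ∧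
    ∀ B ∈ leftShifts A, mon B ∈ I

/-- The expansion of `x^A` in `I`. -/
def expansionIdeal (I : Ideal (PR K n)) (A : Fin (n+1) →₀ ℕ) : Ideal (PR K n) :=
  Ideal.span ((fun B => (mon B : PR K n)) '' ((Gens I \ {A}) ∪ expSet A))

/-- The contraction of `x^A` in `I`. -/
def contractionIdeal (I : Ideal (PR K n)) (A : Fin (n+1) →₀ ℕ) : Ideal (PR K n) :=
  Ideal.span ((fun B => (mon B : PR K n)) '' ((Gens I ∪ {A}) \ expSet A))

/-- Setting `x_{n-1} = x_n = 1` in the exponent vector `A`. -/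
def stripLastTwo (A : Fin (n+1) →₀ ℕ) : Fin (n+1) →₀ ℕ :=
  Finsupp.update (Finsupp.update A (((n : ℕ)) : Fin (n+1)) 0) (((n - 1 : ℕ)) : Fin (n+1)) 0

/-- The double saturation `sat_{x_{n-1},x_n}(I)` (as an ideal of `R`). -/
def doubleSat (I : Ideal (PR K n)) : Ideal (PR K n) :=
  Ideal.span ((fun A => (mon (stripLastTwo A) : PR K n)) '' Gens I)

/-- Restriction of an exponent vector to the first `n` variables. -/
def restrictExp (A : Fin (n+1) →₀ ℕ) : Fin n →₀ ℕ :=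
  Finsupp.comapDomain Fin.castSucc A (Fin.castSucc_injective n).injOn

/-- The ideal `I · R^{(1)}` in `K[x_0,…,x_{n-1}]` (for saturated monomial `I`). -/
def restrictIdeal (I : Ideal (PR K n)) : Ideal (MvPolynomial (Fin n) K) :=
  Ideal.span ((fun A => (monomial (restrictExp A) (1 : K) : MvPolynomial (Fin n) K)) '' Gens I)

/-- Lex order on exponent vectors in `n` variables. -/
def LexGt' (A B : Fin n →₀ ℕ) : Prop :=
  ∃ i : Fin n, (∀ j : Fin n, j < i → A j = B j) ∧ B i < A i

/-- Monomial ideal in `K[x_0,…,x_{n-1}]`. -/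
def IsMonomialIdeal' (I : Ideal (MvPolynomial (Fin n) K)) : Prop :=
  ∃ S : Set (Fin n →₀ ℕ),
    I = Ideal.span ((fun A => (monomial A (1 : K) : MvPolynomial (Fin n) K)) '' S)

/-- Lexsegment ideal in `K[x_0,…,x_{n-1}]`. -/
def IsLexsegment' (I : Ideal (MvPolynomial (Fin n) K)) : Prop :=
  IsMonomialIdeal' I ∧ ∀ A B : Fin n →₀ ℕ, (∑ i, A i) = (∑ i, B i) →
    monomial B (1 : K) ∈ I → LexGt' A B → monomial A (1 : K) ∈ I

/-- `I` is almost lexsegment: saturated strongly stable with `I·R^{(1)}` lexsegment. -/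
def AlmostLex (I : Ideal (PR K n)) : Prop :=
  IsMonomialIdeal I ∧ StronglyStable I ∧ Saturated I ∧ IsLexsegment' (restrictIdeal I)

/-- A graded free resolution of the ideal `I`, with `rank i` the rank of the `i`-th
free module and `twist i k` the degrees of the standard basis elements. -/
structure GradedFreeRes (I : Ideal (PR K n)) where
  rank : ℕ → ℕ
  twist : (i : ℕ) → Fin (rank i) → ℕ
  diff : (i : ℕ) → ((Fin (rank (i+1)) → PR K n) →ₗ[PR K n] (Fin (rank i) → PR K n))
  aug : (Fin (rank 0) → PR K n) →ₗ[PR K n] PR K n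
  aug_range : LinearMap.range aug = I
  aug_graded : ∀ k, aug (Pi.single k 1) ∈ homogeneousSubmodule (Fin (n+1)) K (twist 0 k)
  diff_graded : ∀ i k l, diff i (Pi.single k 1) l = 0 ∨
    (twist i l ≤ twist (i+1) k ∧
      diff i (Pi.single k 1) l ∈ homogeneousSubmodule (Fin (n+1)) K (twist (i+1) k - twist i l))
  exact_aug : LinearMap.range (diff 0) = LinearMap.ker aug
  exact_diff : ∀ i, LinearMap.range (diff (i+1)) = LinearMap.ker (diff i)

/-- A resolution is minimal if all differential entries lie in the irrelevant ideal. -/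
def MinimalRes {I : Ideal (PR K n)} (F : GradedFreeRes I) : Prop :=
  ∀ i k l, constantCoeff (F.diff i (Pi.single k 1) l) = 0

end

/-! For a monomial ideal `J`, the residues of the degree-`j` monomials outside `J` form a basis
of `[R/J]_j`, so `h_{R/J}(j)` counts these monomials.

As `I` is saturated and strongly stable, no minimal generator of `I` involves `x_n`. Hence no old
generator other than `x^A` divides `x^A x_n^k` (it would divide `x^A`), nor does any new one
`x^A x_i` with `i < n`, so `x^A x_n^k ∉ I^exp`. Every other monomial `x^B` of `I` stays in `I^exp`:
if its minimal generator is not `x^A` this is clear; otherwise `x^A x_a ∣ x^B` for some `a < n`,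
and `x^A x_a` is either a new generator (`r ≤ a`) or a multiple of `x_a x^A / x_r ∈ I` (`a < r`),
whose minimal generators differ from `x^A`. So in each degree `j ≥ deg x^A` exactly one monomial,
`x^A x_n^(j - deg x^A)`, leaves the ideal. -/

section MonomialIdeal

open Finset

variable {σ K : Type*} [Field K]

theorem monomial_one_mem_span_monomial_image_iff {S : Set (σ →₀ ℕ)} {B : σ →₀ ℕ} :
    monomial B (1 : K) ∈ Ideal.span ((fun C => monomial C (1 : K)) '' S) ↔ ∃ C ∈ S, C ≤ B := by
  classical
  simp [mem_ideal_span_monomial_image, support_monomial]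

theorem monomial_mem_span_of_mem_support {S : Set (σ →₀ ℕ)} {f : MvPolynomial σ K}
    (hf : f ∈ Ideal.span ((fun C => monomial C (1 : K)) '' S)) {B : σ →₀ ℕ}
    (hB : B ∈ f.support) : monomial B (1 : K) ∈ Ideal.span ((fun C => monomial C (1 : K)) '' S) :=
  monomial_one_mem_span_monomial_image_iff.mpr (mem_ideal_span_monomial_image.mp hf B hB)

theorem linearIndependent_mk_monomial (J : Ideal (MvPolynomial σ K))
    (hJ : ∀ f ∈ J, ∀ B ∈ f.support, monomial B (1 : K) ∈ J) :
    LinearIndependent K (fun B : {B : σ →₀ ℕ // monomial B (1 : K) ∉ J} =>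
      Ideal.Quotient.mkₐ K J (monomial B.1 (1 : K))) := by
  classical
  rw [linearIndependent_iff']
  intro s g hg B hB
  set f : MvPolynomial σ K := ∑ C ∈ s, g C • monomial C.1 1
  have hfJ : f ∈ J := by
    have : Ideal.Quotient.mkₐ K J f = 0 := by simpa only [f, map_sum, map_smul] using hg
    exact Ideal.Quotient.eq_zero_iff_mem.mp this
  have hcoeff : coeff B.1 f = g B := by
    simp [f, coeff_sum, coeff_monomial, Subtype.val_inj, hB]
  by_contra hgB
  exact B.2 (hJ f hfJ B.1 (mem_support_iff.mpr (hcoeff ▸ hgB)))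

theorem homogeneousSubmodule_eq_span_monomial (j : ℕ) :
    homogeneousSubmodule σ K j =
      Submodule.span K ((fun B => monomial B (1 : K)) '' {B | B.degree = j}) := by
  rw [homogeneousSubmodule_eq_finsupp_supported, AddMonoidAlgebra.supported_eq_span_single]
  rfl

variable [Fintype σ]

open scoped Classical in
noncomputable def standardExponents (J : Ideal (MvPolynomial σ K)) (j : ℕ) : Finset (σ →₀ ℕ) :=
  {B ∈ finsuppAntidiag univ j | monomial B (1 : K) ∉ J}

theorem mem_standardExponents {J : Ideal (MvPolynomial σ K)} {j : ℕ} {B : σ →₀ ℕ} :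
    B ∈ standardExponents J j ↔ B.degree = j ∧ monomial B (1 : K) ∉ J := by
  simp [standardExponents, Finsupp.degree_eq_sum]

theorem map_mkₐ_homogeneousSubmodule (J : Ideal (MvPolynomial σ K)) (j : ℕ) :
    (homogeneousSubmodule σ K j).map (Ideal.Quotient.mkₐ K J).toLinearMap =
      Submodule.span K
        (Set.range fun B : standardExponents J j => Ideal.Quotient.mkₐ K J (monomial B.1 (1 : K))) := by
  rw [homogeneousSubmodule_eq_span_monomial, Submodule.map_span, ← Set.image_comp]
  apply le_antisymm
  · rw [Submodule.span_le]
    rintro _ ⟨B, hB, rfl⟩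
    by_cases hBJ : monomial B (1 : K) ∈ J
    · simp [Ideal.Quotient.eq_zero_iff_mem.mpr hBJ]
    · exact Submodule.subset_span ⟨⟨B, mem_standardExponents.mpr ⟨hB, hBJ⟩⟩, rfl⟩
  · refine Submodule.span_mono ?_
    rintro _ ⟨B, rfl⟩
    exact ⟨B, (mem_standardExponents.mp B.2).1, rfl⟩

theorem hilbF_eq_card_standardExponents (J : Ideal (MvPolynomial σ K))
    (hJ : ∀ f ∈ J, ∀ B ∈ f.support, monomial B (1 : K) ∈ J) (j : ℕ) :
    hilbF J j = #(standardExponents J j) := by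
  let f : standardExponents J j → {B : σ →₀ ℕ // monomial B (1 : K) ∉ J} :=
    fun B => ⟨B.1, (mem_standardExponents.mp B.2).2⟩
  have hind := (linearIndependent_mk_monomial J hJ).comp f
    fun B C h => Subtype.ext (Subtype.mk.inj h)
  rw [hilbF, map_mkₐ_homogeneousSubmodule, ← Fintype.card_coe]
  exact finrank_span_eq_card hind

end MonomialIdeal

section Exponents

variable {ι : Type*}

theorem add_single_one_le {A B : ι →₀ ℕ} (hAB : A ≤ B) {a : ι} (ha : A a < B a) :
    A + Finsupp.single a 1 ≤ B := fun b => by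
  rcases eq_or_ne a b with rfl | hab
  · simpa using ha
  · simpa [Finsupp.single_apply, hab] using hAB b

theorem exists_ne_lt_of_forall_ne_add_single {A B : ι →₀ ℕ} (hAB : A ≤ B) {i : ι}
    (hB : ∀ k, B ≠ A + Finsupp.single i k) : ∃ a ≠ i, A a < B a := by
  by_contra! h
  refine hB (B i - A i) (Finsupp.ext fun a => ?_)
  have := hAB a
  rcases eq_or_ne a i with rfl | ha
  · simp; omega
  · simpa [Finsupp.single_apply, Ne.symm ha] using le_antisymm (h a ha) this

end Exponents

section Monomials

variable {K : Type*} [Field K] {n : ℕ}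

theorem mon_mul (B C : Fin (n+1) →₀ ℕ) : (mon B : PR K n) * mon C = mon (B + C) := by
  simp [mon, monomial_mul]

theorem mon_mem_of_le {J : Ideal (PR K n)} {B C : Fin (n+1) →₀ ℕ} (hCB : C ≤ B)
    (hC : (mon C : PR K n) ∈ J) : (mon B : PR K n) ∈ J := by
  rw [← tsub_add_cancel_of_le hCB, ← mon_mul]
  exact J.mul_mem_left _ hC

theorem mdeg_eq_degree (B : Fin (n+1) →₀ ℕ) : mdeg B = B.degree :=
  (Finsupp.degree_eq_sum B).symm

theorem mdeg_add_single (A : Fin (n+1) →₀ ℕ) (i : Fin (n+1)) (k : ℕ) :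
    mdeg (A + Finsupp.single i k) = mdeg A + k := by
  simp [mdeg_eq_degree]

theorem mem_standardExponents_iff_mon {J : Ideal (PR K n)} {j : ℕ} {B : Fin (n+1) →₀ ℕ} :
    B ∈ standardExponents J j ↔ mdeg B = j ∧ (mon B : PR K n) ∉ J := by
  rw [mem_standardExponents, mdeg_eq_degree]
  rfl

theorem IsMonomialIdeal.monomial_mem_of_mem_support {J : Ideal (PR K n)}
    (hJ : IsMonomialIdeal J) : ∀ f ∈ J, ∀ B ∈ f.support, monomial B (1 : K) ∈ J := by
  obtain ⟨S, rfl⟩ := hJ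
  exact fun f hf B hB => monomial_mem_span_of_mem_support hf hB

theorem maxIdx_apply_ne_zero {A : Fin (n+1) →₀ ℕ} (hA : A ≠ 0) : A (maxIdx A) ≠ 0 := by
  obtain ⟨m, hm⟩ := Finset.max_of_nonempty (Finsupp.support_nonempty_iff.mpr hA)
  rw [maxIdx, hm]
  exact Finsupp.mem_support_iff.mp (Finset.mem_of_max hm)

theorem shiftM_eq_tsub_add {A : Fin (n+1) →₀ ℕ} {i j : Fin (n+1)} (hij : i ≠ j) :
    shiftM A i j = A - Finsupp.single j 1 + Finsupp.single i 1 := by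
  ext a
  simp only [shiftM, Finsupp.tsub_apply, Finsupp.add_apply, Finsupp.single_apply]
  split_ifs <;> omega

theorem Saturated.mem_of_forall_mul_X_mem {I : Ideal (PR K n)} (hsat : Saturated I)
    {f : PR K n} (h : ∀ i, f * X i ∈ I) : f ∈ I := by
  rw [← hsat, irrIdeal, Ideal.colon_span, Submodule.mem_colon]
  rintro _ ⟨i, rfl⟩
  exact h i

theorem exists_minGen_le {I : Ideal (PR K n)} {B : Fin (n+1) →₀ ℕ} (hB : (mon B : PR K n) ∈ I) :
    ∃ C ≤ B, MinGen I C := by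
  obtain ⟨C, ⟨hCB, hC⟩, hmin⟩ :=
    wellFounded_lt.has_min {C | C ≤ B ∧ (mon C : PR K n) ∈ I} ⟨B, le_rfl, hB⟩
  exact ⟨C, hCB, hC, fun D hDC hne hD => hmin D ⟨hDC.trans hCB, hD⟩ (lt_of_le_of_ne hDC hne)⟩

theorem MinGen.apply_last_eq_zero {I : Ideal (PR K n)} (hss : StronglyStable I)
    (hsat : Saturated I) {C : Fin (n+1) →₀ ℕ} (hC : MinGen I C) : C (Fin.last n) = 0 := by
  by_contra hlast
  set D := C - Finsupp.single (Fin.last n) 1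
  have hD : (mon D : PR K n) ∈ I := hsat.mem_of_forall_mul_X_mem fun i => by
    rw [show (X i : PR K n) = mon (Finsupp.single i 1) from rfl, mon_mul]
    rcases eq_or_ne i (Fin.last n) with rfl | hi
    · rw [tsub_add_cancel_of_le (Finsupp.single_le_iff.mpr (Nat.one_le_iff_ne_zero.mpr hlast))]
      exact hC.1
    · rw [← shiftM_eq_tsub_add hi]
      exact hss C hC.1 i _ hlast (Fin.lt_last_iff_ne_last.mpr hi)
  refine hC.2 D tsub_le_self (fun h => hlast ?_) hD
  have := DFunLike.congr_fun h (Fin.last n)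
  simp [D] at this
  omega

end Monomials

section Expansion

open Finset

variable {K : Type*} [Field K] {n : ℕ}

theorem expansionIdeal_le {I : Ideal (PR K n)} {A : Fin (n+1) →₀ ℕ}
    (hA : (mon A : PR K n) ∈ I) : expansionIdeal I A ≤ I := by
  rw [expansionIdeal, Ideal.span_le]
  rintro _ ⟨B, ⟨hB, -⟩ | ⟨j, -, -, rfl⟩, rfl⟩
  · exact hB.1
  · exact mon_mem_of_le le_self_add hA

theorem mon_mem_expansionIdeal_iff_exists_le {I : Ideal (PR K n)} {A B : Fin (n+1) →₀ ℕ} :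
    (mon B : PR K n) ∈ expansionIdeal I A ↔ ∃ C ∈ (Gens I \ {A}) ∪ expSet A, C ≤ B :=
  monomial_one_mem_span_monomial_image_iff

theorem mon_add_single_last_notMem_expansionIdeal {I : Ideal (PR K n)} (hss : StronglyStable I)
    (hsat : Saturated I) {A : Fin (n+1) →₀ ℕ} (hA : MinGen I A) (k : ℕ) :
    (mon (A + Finsupp.single (Fin.last n) k) : PR K n) ∉ expansionIdeal I A := by
  rw [mon_mem_expansionIdeal_iff_exists_le]
  rintro ⟨C, ⟨hC, hCA⟩ | ⟨j, -, hj, rfl⟩, hle⟩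
  · have hCle : C ≤ A := fun a => by
      rcases eq_or_ne a (Fin.last n) with rfl | ha
      · simp [MinGen.apply_last_eq_zero hss hsat hC]
      · simpa [Finsupp.single_apply, Ne.symm ha] using hle a
    exact hA.2 C hCle hCA hC.1
  · have hj' : Fin.last n ≠ j := fun h => by simp [← h] at hj
    simpa [Finsupp.single_apply, hj'] using hle j

theorem mon_mem_expansionIdeal {I : Ideal (PR K n)} (hss : StronglyStable I)
    {A : Fin (n+1) →₀ ℕ} (hA0 : A ≠ 0) (hA : MinGen I A) {B : Fin (n+1) →₀ ℕ}
    (hB : (mon B : PR K n) ∈ I) (hBA : ∀ k, B ≠ A + Finsupp.single (Fin.last n) k) :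
    (mon B : PR K n) ∈ expansionIdeal I A := by
  rw [mon_mem_expansionIdeal_iff_exists_le]
  obtain ⟨C, hCB, hC⟩ := exists_minGen_le hB
  rcases (eq_or_ne A C).symm with hAC | rfl
  · exact ⟨C, Or.inl ⟨hC, hAC.symm⟩, hCB⟩
  obtain ⟨a, ha, hlt⟩ := exists_ne_lt_of_forall_ne_add_single hCB hBA
  have hr := maxIdx_apply_ne_zero hA0
  rcases lt_or_ge a (maxIdx A) with har | hra
  · have hS := hss A hA.1 a _ hr har
    rw [shiftM_eq_tsub_add har.ne] at hS
    obtain ⟨D, hDS, hD⟩ := exists_minGen_le hS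
    refine ⟨D, Or.inl ⟨hD, ?_⟩, hDS.trans ((add_le_add_left tsub_le_self _).trans
      (add_single_one_le hCB hlt))⟩
    rintro rfl
    have := hDS (maxIdx D)
    simp [har.ne] at this
    omega
  · refine ⟨A + Finsupp.single a 1, Or.inr ⟨a, hra, ?_, rfl⟩, add_single_one_le hCB hlt⟩
    have := Fin.lt_last_iff_ne_last.mpr ha
    rw [Fin.lt_def, Fin.val_last] at this
    omega

theorem mon_mem_expansionIdeal_iff {I : Ideal (PR K n)} (hss : StronglyStable I)
    (hsat : Saturated I) {A : Fin (n+1) →₀ ℕ} (hA0 : A ≠ 0) (hA : MinGen I A)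
    {B : Fin (n+1) →₀ ℕ} : (mon B : PR K n) ∈ expansionIdeal I A ↔
      (mon B : PR K n) ∈ I ∧ ∀ k, B ≠ A + Finsupp.single (Fin.last n) k := by
  refine ⟨fun hB => ⟨expansionIdeal_le hA.1 hB, ?_⟩,
    fun ⟨hB, hBA⟩ => mon_mem_expansionIdeal hss hA0 hA hB hBA⟩
  rintro k rfl
  exact mon_add_single_last_notMem_expansionIdeal hss hsat hA k hB

theorem standardExponents_expansionIdeal {I : Ideal (PR K n)} (hss : StronglyStable I)
    (hsat : Saturated I) {A : Fin (n+1) →₀ ℕ} (hA0 : A ≠ 0) (hA : MinGen I A) (j : ℕ) :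
    standardExponents (expansionIdeal I A) j = if j < mdeg A then standardExponents I j
      else insert (A + Finsupp.single (Fin.last n) (j - mdeg A)) (standardExponents I j) := by
  ext B
  rw [apply_ite (B ∈ ·), mem_insert, mem_standardExponents_iff_mon, mem_standardExponents_iff_mon,
    mon_mem_expansionIdeal_iff hss hsat hA0 hA]
  have hdeg : ∀ k, mdeg (A + Finsupp.single (Fin.last n) k) = mdeg A + k :=
    mdeg_add_single A (Fin.last n)
  split_ifs with hj
  · refine ⟨fun ⟨hBj, h⟩ => ⟨hBj, fun hB => h ⟨hB, ?_⟩⟩, fun ⟨hBj, hB⟩ => ⟨hBj, fun h => hB h.1⟩⟩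
    rintro k rfl
    grind
  · constructor
    · rintro ⟨rfl, h⟩
      by_cases hB : (mon B : PR K n) ∈ I
      · obtain ⟨k, rfl⟩ : ∃ k, B = A + Finsupp.single (Fin.last n) k := by
          by_contra! hBA
          exact h ⟨hB, hBA⟩
        grind
      · exact Or.inr ⟨rfl, hB⟩
    · rintro (rfl | ⟨hBj, hB⟩)
      · exact ⟨by grind, fun h => h.2 _ rfl⟩
      · exact ⟨hBj, fun h => hB h.1⟩

end Expansion

theorem hilbF_expansion_general
    {K : Type*} [Field K] {n : ℕ} (I : Ideal (PR K n))
    (hmono : IsMonomialIdeal I) (hss : StronglyStable I) (hsat : Saturated I)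
    (A : Fin (n+1) →₀ ℕ) (hA : Expandable I A) (j : ℕ) :
    hilbF (expansionIdeal I A) j =
      if j < mdeg A then hilbF I j else hilbF I j + 1 := by
  obtain ⟨hA0, hAmin, -⟩ := hA
  have hE : IsMonomialIdeal (expansionIdeal I A) := ⟨_, rfl⟩
  rw [hilbF_eq_card_standardExponents _ hE.monomial_mem_of_mem_support,
    hilbF_eq_card_standardExponents _ hmono.monomial_mem_of_mem_support,
    standardExponents_expansionIdeal hss hsat hA0 hAmin]
  split_ifs
  · rfl
  · refine Finset.card_insert_of_notMem fun h => (mem_standardExponents_iff_mon.mp h).2 ?_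
    exact mon_mem_of_le le_self_add hAmin.1

/-- the Hilbert function of an expansion: it agrees with that of `I`
below `deg x^A` and exceeds it by exactly `1` from `deg x^A` on. -/
theorem hilbF_expansion
    {K : Type*} [Field K] {n : ℕ} (hn : 2 ≤ n) (I : Ideal (PR K n))
    (hmono : IsMonomialIdeal I) (hss : StronglyStable I) (hsat : Saturated I)
    (A : Fin (n+1) →₀ ℕ) (hA : Expandable I A) (j : ℕ) :
    hilbF (expansionIdeal I A) j =
      if j < mdeg A then hilbF I j else hilbF I j + 1 :=
  hilbF_expansion_general I hmono hss hsat A hA j
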